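/- Let (M,ρ) be a metric space, X a compact metric space, and for each y ∈ Y (a metric space), g ∈ C(X,M), ε > 0: let F(g,ε,y) denote the union of all continua C of diameter ≥ ε contained in f⁻¹(y) ∩ g⁻¹(z) for some point z ∈ M, where f : X → Y is a perfect map. Then F(g,ε,y) is a closed (hence compact) subset of f⁻¹(y). -/

import Mathlib

/-!
A continuum `C` occurring in `F(g,ε,y)` is a point of the hyperspace of nonempty compact subsets
of `X` (Vietoris topology, which is the Hausdorff-metric topology), and each defining condition
(preconnected, `diam ≥ ε`, contained in the closed fiber, `g` constant on it) is closed there: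
`diam` is `2`-Lipschitz for the Hausdorff distance, and `g` is constant on `C` iff `g '' C` is a
singleton, a closed condition in the hyperspace of `M`. These continua all lie in the compact
fiber `f⁻¹(y)`, whose nonempty compact subsets form a compact family; so they form a compact
family of compact sets, whose union is compact and hence closed.
-/

/-- `LelekUnion f g ε y` is the set `F(g,ε,y)`: the union of all continua `C` of
diameter `≥ ε` contained in `f⁻¹(y)` on which `g` is constant. -/
def LelekUnion {X Y M : Type*} [MetricSpace X] [MetricSpace Y] [MetricSpace M]
    (f : C(X, Y)) (g : C(X, M)) (ε : ℝ) (y : Y) : Set X :=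
  ⋃₀ {C : Set X | IsCompact C ∧ IsConnected C ∧ ε ≤ Metric.diam C ∧
      C ⊆ ⇑f ⁻¹' {y} ∧ ∃ z : M, C ⊆ ⇑g ⁻¹' {z}}

open Metric Set TopologicalSpace

namespace TopologicalSpace.NonemptyCompacts

theorem isClosed_setOf_isPreconnected {X : Type*} [TopologicalSpace X] [T2Space X] :
    IsClosed {K : NonemptyCompacts X | IsPreconnected (K : Set X)} := by
  rw [← isOpen_compl_iff, isOpen_iff_forall_mem_open]
  -- A closed separation of `K` is widened to disjoint open sets `U`, `V`; being covered by
  -- `U ∪ V` while meeting both is an open condition, and it rules out preconnectedness.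
  intro K hK
  simp only [mem_compl_iff, mem_ofPred_eq,
    isPreconnected_iff_subset_of_fully_disjoint_closed K.isCompact.isClosed] at hK
  push Not at hK
  obtain ⟨u, v, hu, hv, hKuv, huv, hKu, hKv⟩ := hK
  obtain ⟨U, V, hU, hV, hKU, hKV, hUV⟩ := SeparatedNhds.of_isCompact_isCompact
    (K.isCompact.inter_right hu) (K.isCompact.inter_right hv)
    (huv.mono inter_subset_right inter_subset_right)
  refine ⟨{L | (L : Set X) ⊆ U ∪ V} ∩ {L | ((L : Set X) ∩ U).Nonempty} ∩
      {L | ((L : Set X) ∩ V).Nonempty}, ?_, ?_, ?_⟩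
  · rintro L ⟨⟨hLUV, hLU⟩, hLV⟩ hL
    obtain ⟨x, -, hxU, hxV⟩ := hL U V hU hV hLUV hLU hLV
    exact hUV.le_bot ⟨hxU, hxV⟩
  · exact ((isOpen_subsets_of_isOpen (hU.union hV)).inter
      (isOpen_inter_nonempty_of_isOpen hU)).inter (isOpen_inter_nonempty_of_isOpen hV)
  · obtain ⟨a, haK, hav⟩ := not_subset.1 hKv
    obtain ⟨b, hbK, hbu⟩ := not_subset.1 hKu
    refine ⟨⟨fun x hx => ?_, a, haK, hKU ⟨haK, (hKuv haK).resolve_right hav⟩⟩,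
      b, hbK, hKV ⟨hbK, (hKuv hbK).resolve_left hbu⟩⟩
    exact (hKuv hx).imp (fun hxu => hKU ⟨hx, hxu⟩) (fun hxv => hKV ⟨hx, hxv⟩)

theorem isClosed_setOf_image_subsingleton {X M : Type*} [TopologicalSpace X]
    [TopologicalSpace M] [T2Space M] {g : X → M} (hg : Continuous g) :
    IsClosed {K : NonemptyCompacts X | (g '' K).Subsingleton} := by
  have hrange : {L : NonemptyCompacts M | (L : Set M).Subsingleton} = range ({·}) := by
    ext L
    refine ⟨fun hL => ?_, ?_⟩
    · obtain ⟨z, hz⟩ := L.nonempty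
      exact ⟨z, NonemptyCompacts.ext (hL.eq_singleton_of_mem hz).symm⟩
    · rintro ⟨z, rfl⟩
      exact subsingleton_singleton
  have := (hrange ▸ isClosedEmbedding_singleton.isClosed_range).preimage hg.nonemptyCompacts_map
  simpa only [preimage_ofPred_eq, coe_map] using this

end TopologicalSpace.NonemptyCompacts

namespace Metric.NonemptyCompacts

variable {X : Type*} [MetricSpace X]

theorem diam_le_diam_add_two_mul_dist (K L : NonemptyCompacts X) :
    diam (K : Set X) ≤ diam (L : Set X) + 2 * dist K L := by
  rw [NonemptyCompacts.dist_eq]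
  have hnear :
      ∀ p ∈ (K : Set X), ∃ p' ∈ (L : Set X), dist p p' ≤ hausdorffDist (K : Set X) L := by
    intro p hp
    obtain ⟨p', hp', hpp'⟩ := L.isCompact.exists_infDist_eq_dist L.nonempty p
    exact ⟨p', hp', hpp' ▸ infDist_le_hausdorffDist_of_mem hp (edist_ne_top K L)⟩
  refine diam_le_of_forall_dist_le
    (add_nonneg diam_nonneg (mul_nonneg zero_le_two hausdorffDist_nonneg)) fun p hp q hq => ?_
  obtain ⟨p', hp', hpp'⟩ := hnear p hp
  obtain ⟨q', hq', hqq'⟩ := hnear q hq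
  calc dist p q ≤ dist p p' + dist p' q' + dist q' q := dist_triangle4 p p' q' q
    _ ≤ _ := by
      have := dist_le_diam_of_mem L.isCompact.isBounded hp' hq'
      rw [dist_comm q' q]
      linarith

theorem lipschitzWith_diam :
    LipschitzWith 2 fun K : NonemptyCompacts X => diam (K : Set X) :=
  .of_le_add_mul 2 diam_le_diam_add_two_mul_dist

end Metric.NonemptyCompacts

section LelekFamily

variable {X Y M : Type*} [MetricSpace X]

def lelekFamily [TopologicalSpace Y] [TopologicalSpace M] (f : C(X, Y)) (g : C(X, M)) (ε : ℝ)
    (y : Y) : Set (NonemptyCompacts X) :=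
  {K | IsPreconnected (K : Set X) ∧ ε ≤ diam (K : Set X) ∧ (K : Set X) ⊆ f ⁻¹' {y} ∧
    (g '' K).Subsingleton}

theorem lelekUnion_eq_biUnion_lelekFamily [MetricSpace Y] [MetricSpace M] (f : C(X, Y))
    (g : C(X, M)) (ε : ℝ) (y : Y) :
    LelekUnion f g ε y = ⋃ K ∈ lelekFamily f g ε y, (K : Set X) := by
  ext x
  simp only [LelekUnion, lelekFamily, mem_sUnion, mem_iUnion, mem_ofPred_eq, exists_prop]
  constructor
  · rintro ⟨C, ⟨hCc, hCconn, hCdiam, hCf, z, hCg⟩, hxC⟩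
    exact ⟨⟨⟨C, hCc⟩, hCconn.nonempty⟩, ⟨hCconn.isPreconnected, hCdiam, hCf,
      subsingleton_singleton.anti (image_subset_iff.2 hCg)⟩, hxC⟩
  · rintro ⟨K, ⟨hKconn, hKdiam, hKf, hKg⟩, hxK⟩
    exact ⟨K, ⟨K.isCompact, ⟨K.nonempty, hKconn⟩, hKdiam, hKf, g x,
      image_subset_iff.1 fun _ hz => hKg hz (mem_image_of_mem g hxK)⟩, hxK⟩

theorem isClosed_lelekFamily [TopologicalSpace Y] [T1Space Y] [TopologicalSpace M] [T2Space M]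
    (f : C(X, Y)) (g : C(X, M)) (ε : ℝ) (y : Y) : IsClosed (lelekFamily f g ε y) :=
  NonemptyCompacts.isClosed_setOf_isPreconnected.inter <|
    (isClosed_le continuous_const NonemptyCompacts.lipschitzWith_diam.continuous).inter <|
    (NonemptyCompacts.isClosed_subsets_of_isClosed (isClosed_singleton.preimage f.continuous)).inter
      (NonemptyCompacts.isClosed_setOf_image_subsingleton g.continuous)

end LelekFamily

theorem stmt19_general {X Y M : Type*} [MetricSpace X]
    [MetricSpace Y] [MetricSpace M]
    (f : C(X, Y))
    (hcompfib : ∀ y : Y, IsCompact (⇑f ⁻¹' {y}))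
    (g : C(X, M)) (ε : ℝ) (y : Y) :
    IsClosed (LelekUnion f g ε y) ∧ IsCompact (LelekUnion f g ε y) ∧
      LelekUnion f g ε y ⊆ ⇑f ⁻¹' {y} := by
  have hfamily : IsCompact (lelekFamily f g ε y) :=
    (NonemptyCompacts.isCompact_subsets_of_isCompact (hcompfib y)).of_isClosed_subset
      (isClosed_lelekFamily f g ε y) fun K hK => hK.2.2.1
  rw [lelekUnion_eq_biUnion_lelekFamily]
  have hunion := NonemptyCompacts.isCompact_biUnion_coe_of_isCompact hfamily
  exact ⟨hunion.isClosed, hunion, iUnion₂_subset fun K hK => hK.2.2.1⟩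

/-- For a perfect map `f : X → Y` from a compact metric space and any
`g ∈ C(X,M)`, `ε > 0`, `y ∈ Y`, the set `F(g,ε,y)` is a closed (hence compact)
subset of the fiber `f⁻¹(y)`. -/
theorem stmt19 {X Y M : Type*} [MetricSpace X] [CompactSpace X]
    [MetricSpace Y] [MetricSpace M]
    (f : C(X, Y)) (hclosed : IsClosedMap ⇑f)
    (hcompfib : ∀ y : Y, IsCompact (⇑f ⁻¹' {y}))
    (g : C(X, M)) (ε : ℝ) (hε : 0 < ε) (y : Y) :
    IsClosed (LelekUnion f g ε y) ∧ IsCompact (LelekUnion f g ε y) ∧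
      LelekUnion f g ε y ⊆ ⇑f ⁻¹' {y} :=
  stmt19_general f hcompfib g ε y
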